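/- arXiv:2108.10822 — 2 statements merged into one kernel-verified Lean document; each statement's English description precedes it below -/
import Mathlib

section
/- (Nonvanishing of the third-order denominator.) Let g > 0 and for k ∈ ℝ² set ω(k) = √(g‖k‖). If k₁, k₂, k₃ ∈ ℝ² are all nonzero and k₁ + k₂ + k₃ = 0, then the denominator d₁₂₃ = (ω(k₁)+ω(k₂)+ω(k₃))(ω(k₁)+ω(k₂)−ω(k₃))(ω(k₁)−ω(k₂)+ω(k₃))(ω(k₁)−ω(k₂)−ω(k₃)) is strictly negative; in particular d₁₂₃ ≠ 0. -/
/-!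
Write `x, y, z` for the three frequencies. Since `x² = g‖k₁‖` and `k₁ + k₂ + k₃ = 0`, the squares
`x², y², z²` satisfy the triangle inequalities. The denominator factors as
`((x + y)² - z²) ((x - y)² - z²)`; the first factor is positive because `z² ≤ x² + y² < (x + y)²`, and
the second is negative because `|x - y| < z`, which follows from `x² ≤ y² + z²` and `y² ≤ x² + z²`.
-/

/-- Euclidean norm on ℝ². -/
noncomputable def norm2 (k : ℝ × ℝ) : ℝ := Real.sqrt (k.1 ^ 2 + k.2 ^ 2)

/-- Deep-water dispersion relation ω(k) = √(g‖k‖). -/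
noncomputable def omg (g : ℝ) (k : ℝ × ℝ) : ℝ := Real.sqrt (g * norm2 k)

lemma sub_sq_lt_sq_of_sq_le_add {x y z : ℝ} (hx : 0 < x) (hy : 0 < y) (hz : 0 < z)
    (hxyz : x ^ 2 ≤ y ^ 2 + z ^ 2) (hyxz : y ^ 2 ≤ x ^ 2 + z ^ 2) : (x - y) ^ 2 < z ^ 2 := by
  wlog hyx : y ≤ x generalizing x y
  · rw [← neg_sub, neg_sq]
    exact this hy hx hyxz hxyz (le_of_not_ge hyx)
  rcases hyx.eq_or_lt with rfl | hlt
  · simpa using pow_pos hz 2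
  · nlinarith [mul_pos hy (sub_pos.2 hlt)]

lemma d_neg_of_sq_triangle {x y z : ℝ} (hx : 0 < x) (hy : 0 < y) (hz : 0 < z)
    (hzxy : z ^ 2 ≤ x ^ 2 + y ^ 2) (hxyz : x ^ 2 ≤ y ^ 2 + z ^ 2) (hyxz : y ^ 2 ≤ x ^ 2 + z ^ 2) :
    (x + y + z) * (x + y - z) * (x - y + z) * (x - y - z) < 0 := by
  have hplus : 0 < (x + y) ^ 2 - z ^ 2 := by nlinarith [mul_pos hx hy]
  have hminus : (x - y) ^ 2 - z ^ 2 < 0 :=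
    sub_neg.2 (sub_sq_lt_sq_of_sq_le_add hx hy hz hxyz hyxz)
  calc (x + y + z) * (x + y - z) * (x - y + z) * (x - y - z)
      = ((x + y) ^ 2 - z ^ 2) * ((x - y) ^ 2 - z ^ 2) := by ring
    _ < 0 := mul_neg_of_pos_of_neg hplus hminus

-- The norm of `ℝ × ℝ` is the sup norm, so `norm2` is transported to `ℂ` instead.
lemma norm2_eq_norm_complex (k : ℝ × ℝ) : norm2 k = ‖Complex.equivRealProdLm.symm k‖ := by
  simp [norm2, Complex.norm_def, Complex.normSq_apply, sq]

lemma norm2_pos {k : ℝ × ℝ} (hk : k ≠ 0) : 0 < norm2 k := by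
  simpa [norm2_eq_norm_complex] using hk

lemma norm2_le_add_of_add_add_eq_zero {k₁ k₂ k₃ : ℝ × ℝ} (hsum : k₁ + k₂ + k₃ = 0) :
    norm2 k₃ ≤ norm2 k₁ + norm2 k₂ := by
  have hk₃ : k₃ = -(k₁ + k₂) := eq_neg_of_add_eq_zero_right hsum
  simp only [norm2_eq_norm_complex, hk₃, map_neg, map_add, norm_neg]
  exact norm_add_le _ _

lemma omg_sq {g : ℝ} (hg : 0 ≤ g) (k : ℝ × ℝ) : omg g k ^ 2 = g * norm2 k :=
  Real.sq_sqrt (mul_nonneg hg (Real.sqrt_nonneg _))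

lemma omg_pos {g : ℝ} (hg : 0 < g) {k : ℝ × ℝ} (hk : k ≠ 0) : 0 < omg g k :=
  Real.sqrt_pos.2 (mul_pos hg (norm2_pos hk))

lemma omg_sq_le_add_of_add_add_eq_zero {g : ℝ} (hg : 0 ≤ g) {k₁ k₂ k₃ : ℝ × ℝ}
    (hsum : k₁ + k₂ + k₃ = 0) : omg g k₃ ^ 2 ≤ omg g k₁ ^ 2 + omg g k₂ ^ 2 := by
  rw [omg_sq hg, omg_sq hg, omg_sq hg, ← mul_add]
  exact mul_le_mul_of_nonneg_left (norm2_le_add_of_add_add_eq_zero hsum) hg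

/-- Nonvanishing (in fact strict negativity) of the third-order denominator d₁₂₃. -/
theorem d123_neg (g : ℝ) (hg : 0 < g) (k₁ k₂ k₃ : ℝ × ℝ)
    (h₁ : k₁ ≠ 0) (h₂ : k₂ ≠ 0) (h₃ : k₃ ≠ 0) (hsum : k₁ + k₂ + k₃ = 0) :
    (omg g k₁ + omg g k₂ + omg g k₃) * (omg g k₁ + omg g k₂ - omg g k₃) *
      (omg g k₁ - omg g k₂ + omg g k₃) * (omg g k₁ - omg g k₂ - omg g k₃) < 0 := by
  have hsum₁ : k₂ + k₃ + k₁ = 0 := by rw [← hsum]; abel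
  have hsum₂ : k₁ + k₃ + k₂ = 0 := by rw [← hsum]; abel
  exact d_neg_of_sq_triangle (omg_pos hg h₁) (omg_pos hg h₂) (omg_pos hg h₃)
    (omg_sq_le_add_of_add_add_eq_zero hg.le hsum)
    (omg_sq_le_add_of_add_add_eq_zero hg.le hsum₁)
    (omg_sq_le_add_of_add_add_eq_zero hg.le hsum₂)
end

section
/- (Smallness of near-antiparallel ℓ-coefficients under the modulational Ansatz.) Let k₀ > 0 and χ₁, χ₂ ∈ ℝ² be fixed, and set k₁(ε) = (k₀,0) + ε χ₁ and k₂(ε) = (k₀,0) + ε χ₂. Then the function ε ↦ ℓ_{k₁(ε)+k₂(ε)}^{−k₁(ε)} = ( ‖k₁+k₂‖·‖k₁‖ − (k₁+k₂)·k₁ ) / √(‖k₁+k₂‖·‖k₁‖) is O(ε²) as ε → 0. -/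
/-!
Lagrange's identity `(‖a‖‖b‖)² = (a·b)² + (a × b)²` rewrites the numerator as
`‖a‖‖b‖ - a·b = (a × b)² / (‖a‖‖b‖ + a·b)`. For `a = k₁ + k₂`, `b = k₁` the cross product
equals `k₂ × k₁`, which is `O(ε)` because both wavevectors are `O(ε)`-perturbations of the same
carrier; the denominator stays near `4k₀² · √2 k₀ ≠ 0`. Hence the quotient is `O(ε²)`.
-/

open Asymptotics Filter Topology

/-- Euclidean inner product on ℝ². -/
def dot (a b : ℝ × ℝ) : ℝ := a.1 * b.1 + a.2 * b.2

def cross (a b : ℝ × ℝ) : ℝ := a.1 * b.2 - a.2 * b.1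

noncomputable def ell (a b : ℝ × ℝ) : ℝ :=
  (norm2 a * norm2 b + dot a b) / √(norm2 a * norm2 b)

section Algebra

variable (a b c : ℝ × ℝ)

lemma norm2_nonneg : 0 ≤ norm2 a := Real.sqrt_nonneg _

lemma norm2_sq : norm2 a ^ 2 = a.1 ^ 2 + a.2 ^ 2 := Real.sq_sqrt (by positivity)

lemma norm2_neg : norm2 (-a) = norm2 a := by simp [norm2]

lemma dot_neg_right : dot a (-b) = -dot a b := by
  simp only [dot, Prod.fst_neg, Prod.snd_neg]; ring

lemma cross_add_left : cross (a + b) c = cross a c + cross b c := by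
  simp only [cross, Prod.fst_add, Prod.snd_add]; ring

lemma cross_self_eq_zero : cross a a = 0 := by simp only [cross]; ring

lemma norm2_mul_norm2_sq : (norm2 a * norm2 b) ^ 2 = dot a b ^ 2 + cross a b ^ 2 := by
  rw [mul_pow, norm2_sq, norm2_sq]; simp only [dot, cross]; ring

lemma dot_le_norm2_mul_norm2 : dot a b ≤ norm2 a * norm2 b :=
  abs_le_of_sq_le_sq' (by nlinarith [norm2_mul_norm2_sq a b, sq_nonneg (cross a b)])
    (mul_nonneg (norm2_nonneg a) (norm2_nonneg b)) |>.2

lemma norm2_mul_norm2_sub_dot {a b : ℝ × ℝ} (h : norm2 a * norm2 b + dot a b ≠ 0) :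
    norm2 a * norm2 b - dot a b = cross a b ^ 2 / (norm2 a * norm2 b + dot a b) := by
  rw [eq_div_iff h]
  linear_combination norm2_mul_norm2_sq a b

lemma ell_neg_right :
    ell a (-b) = (norm2 a * norm2 b - dot a b) / √(norm2 a * norm2 b) := by
  rw [ell, norm2_neg, dot_neg_right, sub_eq_add_neg]

lemma ell_neg_right_eq_cross_sq_div {a b : ℝ × ℝ} (h : norm2 a * norm2 b + dot a b ≠ 0) :
    ell a (-b) = cross a b ^ 2 *
      ((norm2 a * norm2 b + dot a b) * √(norm2 a * norm2 b))⁻¹ := by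
  rw [ell_neg_right, norm2_mul_norm2_sub_dot h, div_div, div_eq_mul_inv]

lemma cross_add_smul_add_smul (p u v : ℝ × ℝ) (ε : ℝ) :
    cross (p + ε • u) (p + ε • v) = ε * (cross p v + cross u p + ε * cross u v) := by
  simp only [cross, Prod.fst_add, Prod.snd_add, Prod.smul_fst, Prod.smul_snd, smul_eq_mul]
  ring

end Algebra

lemma continuous_norm2 : Continuous norm2 := by unfold norm2; fun_prop

lemma continuous_dot : Continuous fun p : (ℝ × ℝ) × (ℝ × ℝ) => dot p.1 p.2 := by
  unfold dot; fun_prop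

lemma isBigO_cross_add_smul_add_smul (p u v : ℝ × ℝ) :
    (fun ε : ℝ => cross (p + ε • u) (p + ε • v)) =O[𝓝 0] fun ε => ε := by
  simp_rw [cross_add_smul_add_smul]
  have hbounded : Tendsto (fun ε : ℝ => cross p v + cross u p + ε * cross u v) (𝓝 0)
      (𝓝 (cross p v + cross u p + 0 * cross u v)) := by
    apply Continuous.tendsto; fun_prop
  simpa using (isBigO_refl (fun ε : ℝ => ε) _).mul (hbounded.isBigO_one ℝ)

theorem ell_neg_isBigO_sq {α : Type*} {l : Filter α} {a b : α → ℝ × ℝ} {a₀ b₀ : ℝ × ℝ}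
    (ha : Tendsto a l (𝓝 a₀)) (hb : Tendsto b l (𝓝 b₀)) (hdot : 0 < dot a₀ b₀)
    {f : α → ℝ} (hcross : (fun t => cross (a t) (b t)) =O[l] f) :
    (fun t => ell (a t) (-b t)) =O[l] fun t => f t ^ 2 := by
  let N : ℝ × ℝ → ℝ × ℝ → ℝ := fun x y => norm2 x * norm2 y
  have hN₀ : 0 < N a₀ b₀ := hdot.trans_le (dot_le_norm2_mul_norm2 a₀ b₀)
  have hN : Tendsto (fun t => N (a t) (b t)) l (𝓝 (N a₀ b₀)) :=
    ((continuous_norm2.tendsto a₀).comp ha).mul ((continuous_norm2.tendsto b₀).comp hb)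
  have hS : Tendsto (fun t => N (a t) (b t) + dot (a t) (b t)) l (𝓝 (N a₀ b₀ + dot a₀ b₀)) :=
    hN.add ((continuous_dot.tendsto (a₀, b₀)).comp (ha.prodMk_nhds hb))
  have hS₀ : 0 < N a₀ b₀ + dot a₀ b₀ := by positivity
  have hD : Tendsto (fun t => ((N (a t) (b t) + dot (a t) (b t)) * √(N (a t) (b t)))⁻¹) l
      (𝓝 ((N a₀ b₀ + dot a₀ b₀) * √(N a₀ b₀))⁻¹) :=
    (hS.mul hN.sqrt).inv₀ (by positivity)
  have hell : (fun t => ell (a t) (-b t)) =ᶠ[l] fun t => cross (a t) (b t) ^ 2 *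
      ((N (a t) (b t) + dot (a t) (b t)) * √(N (a t) (b t)))⁻¹ := by
    filter_upwards [hS.eventually_ne hS₀.ne'] with t ht
    exact ell_neg_right_eq_cross_sq_div ht
  simpa only [mul_one] using ((hcross.pow 2).mul (hD.isBigO_one ℝ)).congr' hell.symm .rfl

/-- Smallness of near-antiparallel ℓ-coefficients under the modulational Ansatz:
    ℓ_{k₁+k₂}^{−k₁} = O(ε²) as ε → 0, where kⱼ = (k₀,0) + ε χⱼ. -/
theorem ell_antiparallel_small (k₀ : ℝ) (hk₀ : 0 < k₀) (χ₁ χ₂ : ℝ × ℝ) :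
    (fun ε : ℝ =>
        (norm2 (((k₀, 0) + ε • χ₁) + ((k₀, 0) + ε • χ₂)) * norm2 ((k₀, 0) + ε • χ₁)
            - dot (((k₀, 0) + ε • χ₁) + ((k₀, 0) + ε • χ₂)) ((k₀, 0) + ε • χ₁)) /
          Real.sqrt (norm2 (((k₀, 0) + ε • χ₁) + ((k₀, 0) + ε • χ₂)) *
            norm2 ((k₀, 0) + ε • χ₁)))
      =O[𝓝 (0 : ℝ)] fun ε => ε ^ 2 := by
  let k : ℝ × ℝ → ℝ → ℝ × ℝ := fun χ ε => (k₀, 0) + ε • χ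
  have hk : ∀ χ, Tendsto (k χ) (𝓝 0) (𝓝 (k₀, 0)) := fun χ => by
    simpa [k] using (Continuous.tendsto (by fun_prop : Continuous (k χ)) 0)
  have hcross : (fun ε => cross (k χ₁ ε + k χ₂ ε) (k χ₁ ε)) =O[𝓝 0] fun ε => ε := by
    refine (isBigO_cross_add_smul_add_smul (k₀, 0) χ₂ χ₁).congr_left fun ε => Eq.symm ?_
    change cross (k χ₁ ε + k χ₂ ε) (k χ₁ ε) = cross (k χ₂ ε) (k χ₁ ε)
    rw [cross_add_left, cross_self_eq_zero, zero_add]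
  have hdot : 0 < dot ((k₀, 0) + (k₀, 0)) (k₀, 0) := by
    simp only [dot, Prod.fst_add, Prod.snd_add]; positivity
  simpa only [ell_neg_right] using ell_neg_isBigO_sq ((hk χ₁).add (hk χ₂)) (hk χ₁) hdot hcross
end
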